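/- Let V be a finite-dimensional commutative real algebra with positive definite associative symmetric bilinear form and nonzero multiplication. Then V contains a nonzero idempotent c (namely an extremal one obtained from maximizing ⟨x,x²⟩ on the unit sphere) such that every eigenvalue of L_c on the orthogonal complement of c is at most 1/2. -/

import Mathlib

/-!
Let `f x = ⟪x, x x⟫` be the cubic form of the algebra; associativity of the form makes
`(x, y, z) ↦ ⟪x, y z⟫` fully symmetric. Let `c` maximise `f` on the unit sphere, with
maximum `λ > 0`, so that `f x ≤ λ ‖x‖³` everywhere. For `y ⊥ c` the function
`s ↦ λ ‖c + s y‖³ - f (c + s y)` is nonnegative and vanishes at `s = 0`. Its linear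
coefficient `-3 ⟪y, c c⟫` must vanish, which gives `c c = λ c`, and its quadratic coefficient
`(3/2) λ ‖y‖² - 3 ⟪c, y y⟫` must be nonnegative. For an eigenvector `c y = λ t y` this says
`t ≤ 1/2`, and `c / λ` is the required idempotent.
-/

open RealInnerProductSpace Metric

lemma nonpos_of_forall_pos_nonpos {g : ℝ → ℝ} (hg : Continuous g) (h : ∀ s > 0, g s ≤ 0) :
    g 0 ≤ 0 :=
  le_of_tendsto (hg.continuousWithinAt (s := Set.Ioi 0)) (eventually_nhdsWithin_of_forall h)

lemma eq_zero_and_nonpos_of_forall_quartic_nonpos {a b c d : ℝ}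
    (h : ∀ s : ℝ, a * s + b * s ^ 2 + c * s ^ 3 + d * s ^ 4 ≤ 0) : a = 0 ∧ b ≤ 0 := by
  have ha_nonpos : a ≤ 0 := by
    have := nonpos_of_forall_pos_nonpos (g := fun s ↦ a + b * s + c * s ^ 2 + d * s ^ 3)
      (by fun_prop) fun s hs ↦ nonpos_of_mul_nonpos_right (a := s) ((h s).trans_eq' (by ring)) hs
    simpa using this
  have ha_nonneg : 0 ≤ a := by
    have := nonpos_of_forall_pos_nonpos (g := fun s ↦ -a + b * s - c * s ^ 2 + d * s ^ 3)
      (by fun_prop) fun s hs ↦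
        nonpos_of_mul_nonpos_right (a := s) ((h (-s)).trans_eq' (by ring)) hs
    simpa using this
  obtain rfl : a = 0 := le_antisymm ha_nonpos ha_nonneg
  have := nonpos_of_forall_pos_nonpos (g := fun s ↦ b + c * s + d * s ^ 2) (by fun_prop)
    fun s hs ↦ nonpos_of_mul_nonpos_right (a := s ^ 2) ((h s).trans_eq' (by ring)) (pow_pos hs 2)
  exact ⟨rfl, by simpa using this⟩

-- `(1 + u) ^ (3/2) ≤ 1 + (3/2) u + u²` with `u = r² - 1`, exact to second order at `u = 0`
lemma pow_three_le_quadratic {r : ℝ} (hr : 0 ≤ r) :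
    r ^ 3 ≤ 1 + 3 / 2 * (r ^ 2 - 1) + (r ^ 2 - 1) ^ 2 := by
  have hpos : 0 < 1 + 3 / 2 * (r ^ 2 - 1) + (r ^ 2 - 1) ^ 2 := by
    nlinarith [sq_nonneg (r ^ 2 - 1 + 3 / 4)]
  refine (pow_le_pow_iff_left₀ (by positivity) hpos.le two_ne_zero).mp ?_
  nlinarith [sq_nonneg (r ^ 2 - 1), sq_nonneg r,
    mul_nonneg (sq_nonneg (r ^ 2 - 1)) (sq_nonneg r)]

section CubicForm

variable {V : Type*} [NormedAddCommGroup V] [InnerProductSpace ℝ V] {mul : V →ₗ[ℝ] V →ₗ[ℝ] V}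

variable (mul) in
def cubicForm (x : V) : ℝ := ⟪x, mul x x⟫

lemma cubicForm_smul (r : ℝ) (x : V) : cubicForm mul (r • x) = r ^ 3 * cubicForm mul x := by
  simp only [cubicForm, map_smul, LinearMap.smul_apply, inner_smul_left, inner_smul_right,
    RCLike.conj_to_real]
  ring

lemma cubicForm_neg (x : V) : cubicForm mul (-x) = -cubicForm mul x := by
  rw [← neg_one_smul ℝ x, cubicForm_smul]
  ring

lemma inner_mul_swap (hcomm : ∀ x y, mul x y = mul y x)
    (hassoc : ∀ x y z, ⟪mul x y, z⟫ = ⟪x, mul y z⟫) (x y z : V) :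
    ⟪x, mul y z⟫ = ⟪y, mul x z⟫ := by
  rw [hcomm y z, ← hassoc, real_inner_comm]

lemma cubicForm_add_smul (hcomm : ∀ x y, mul x y = mul y x)
    (hassoc : ∀ x y z, ⟪mul x y, z⟫ = ⟪x, mul y z⟫) (a b : V) (s : ℝ) :
    cubicForm mul (a + s • b) = cubicForm mul a + 3 * ⟪b, mul a a⟫ * s +
      3 * ⟪a, mul b b⟫ * s ^ 2 + cubicForm mul b * s ^ 3 := by
  have hab : ⟪a, mul a b⟫ = ⟪b, mul a a⟫ := by rw [hcomm, inner_mul_swap hcomm hassoc]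
  have hba : ⟪b, mul a b⟫ = ⟪a, mul b b⟫ := inner_mul_swap hcomm hassoc b a b
  simp only [cubicForm, map_add, map_smul, LinearMap.add_apply, LinearMap.smul_apply,
    inner_add_left, inner_add_right, inner_smul_left, inner_smul_right, RCLike.conj_to_real,
    hcomm b a, hab, hba]
  ring

lemma continuous_cubicForm [FiniteDimensional ℝ V] : Continuous (cubicForm mul) := by
  have : Continuous fun x ↦ mul.toContinuousBilinearMap x x := by fun_prop
  exact continuous_id.inner this

lemma exists_cubicForm_pos (hcomm : ∀ x y, mul x y = mul y x)
    (hassoc : ∀ x y z, ⟪mul x y, z⟫ = ⟪x, mul y z⟫) (hmul : mul ≠ 0) :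
    ∃ x, 0 < cubicForm mul x := by
  by_contra! hnonpos
  have hzero (x : V) : cubicForm mul x = 0 :=
    le_antisymm (hnonpos x) (by simpa [cubicForm_neg] using hnonpos (-x))
  -- `f (a + b) - f (a - b) = 6 ⟪b, a a⟫ + 2 f b`, taken at `b = a a`
  have hsq (a : V) : mul a a = 0 := by
    have hplus := cubicForm_add_smul hcomm hassoc a (mul a a) 1
    have hminus := cubicForm_add_smul hcomm hassoc a (mul a a) (-1)
    norm_num only [hzero] at hplus hminus
    have : ⟪mul a a, mul a a⟫ = 0 := by linarith
    exact inner_self_eq_zero.mp this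
  refine hmul (LinearMap.ext₂ fun x y ↦ ?_)
  have := hsq (x + y)
  simp only [map_add, LinearMap.add_apply, hsq, hcomm y x, zero_add, add_zero] at this
  simpa using (two_smul ℝ (mul x y)).trans this

lemma exists_forall_cubicForm_le [FiniteDimensional ℝ V] [Nontrivial V] :
    ∃ c : V, ‖c‖ = 1 ∧ ∀ x, cubicForm mul x ≤ cubicForm mul c * ‖x‖ ^ 3 := by
  obtain ⟨c, hc, hmax⟩ := (isCompact_sphere (0 : V) 1).exists_isMaxOn
    (NormedSpace.sphere_nonempty.mpr zero_le_one) continuous_cubicForm.continuousOn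
  refine ⟨c, by simpa using hc, fun x ↦ ?_⟩
  rcases eq_or_ne x 0 with rfl | hx
  · simp [cubicForm]
  have hunit : ‖x‖⁻¹ • x ∈ sphere (0 : V) 1 := by simp [norm_smul, hx]
  have := hmax hunit
  rw [Set.mem_ofPred_eq, cubicForm_smul] at this
  calc cubicForm mul x = ‖x‖ ^ 3 * (‖x‖⁻¹ ^ 3 * cubicForm mul x) := by field_simp
    _ ≤ ‖x‖ ^ 3 * cubicForm mul c := by gcongr
    _ = cubicForm mul c * ‖x‖ ^ 3 := mul_comm _ _

lemma inner_mul_self_eq_zero_and_le_of_forall_cubicForm_le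
    (hcomm : ∀ x y, mul x y = mul y x) (hassoc : ∀ x y z, ⟪mul x y, z⟫ = ⟪x, mul y z⟫)
    {c : V} (hc : ‖c‖ = 1) (hmax : ∀ x, cubicForm mul x ≤ cubicForm mul c * ‖x‖ ^ 3)
    {y : V} (hy : ⟪c, y⟫ = 0) :
    ⟪y, mul c c⟫ = 0 ∧ ⟪c, mul y y⟫ ≤ cubicForm mul c * ‖y‖ ^ 2 / 2 := by
  set lam := cubicForm mul c
  have hlam : 0 ≤ lam := by
    have := hmax (-c)
    rw [cubicForm_neg, norm_neg, hc] at this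
    linarith
  have hnorm (s : ℝ) : ‖c + s • y‖ ^ 2 = 1 + s ^ 2 * ‖y‖ ^ 2 := by
    rw [norm_add_sq_real, hc, inner_smul_right, hy, norm_smul, mul_pow, Real.norm_eq_abs, sq_abs]
    ring
  -- `λ ‖c + s y‖³ - f (c + s y)` is nonnegative, and bounding `‖c + s y‖³` by a quadratic in
  -- `‖c + s y‖²` turns this into a polynomial inequality in `s`
  have hpoly (s : ℝ) : 3 * ⟪y, mul c c⟫ * s +
      (3 * ⟪c, mul y y⟫ - 3 / 2 * lam * ‖y‖ ^ 2) * s ^ 2 +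
      cubicForm mul y * s ^ 3 + -(lam * ‖y‖ ^ 4) * s ^ 4 ≤ 0 := by
    have hcube :=
      mul_le_mul_of_nonneg_left (pow_three_le_quadratic (norm_nonneg (c + s • y))) hlam
    have hle := hmax (c + s • y)
    rw [hnorm] at hcube
    rw [cubicForm_add_smul hcomm hassoc] at hle
    nlinarith
  obtain ⟨hlin, hquad⟩ := eq_zero_and_nonpos_of_forall_quartic_nonpos hpoly
  exact ⟨by linarith, by linarith⟩

lemma mul_self_eq_smul_of_forall_cubicForm_le
    (hcomm : ∀ x y, mul x y = mul y x) (hassoc : ∀ x y z, ⟪mul x y, z⟫ = ⟪x, mul y z⟫)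
    {c : V} (hc : ‖c‖ = 1) (hmax : ∀ x, cubicForm mul x ≤ cubicForm mul c * ‖x‖ ^ 3) :
    mul c c = cubicForm mul c • c := by
  set w := mul c c - cubicForm mul c • c
  have hcw : ⟪c, w⟫ = 0 := by
    rw [inner_sub_right, inner_smul_right, real_inner_self_eq_norm_sq, hc]
    simp [cubicForm]
  have hwc : ⟪w, c⟫ = 0 := by rwa [real_inner_comm]
  have hw := (inner_mul_self_eq_zero_and_le_of_forall_cubicForm_le hcomm hassoc hc hmax hcw).1
  have : ⟪w, w⟫ = 0 := calc
    ⟪w, w⟫ = ⟪w, mul c c⟫ - cubicForm mul c * ⟪w, c⟫ := by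
      rw [← inner_smul_right, ← inner_sub_right]
    _ = 0 := by rw [hw, hwc]; ring
  exact sub_eq_zero.mp (inner_self_eq_zero.mp this)

lemma le_half_of_mul_eq_smul_of_forall_cubicForm_le
    (hcomm : ∀ x y, mul x y = mul y x) (hassoc : ∀ x y z, ⟪mul x y, z⟫ = ⟪x, mul y z⟫)
    {c : V} (hc : ‖c‖ = 1) (hmax : ∀ x, cubicForm mul x ≤ cubicForm mul c * ‖x‖ ^ 3)
    {y : V} (hy : y ≠ 0) (hcy : ⟪c, y⟫ = 0) {μ : ℝ} (hμ : mul c y = μ • y) :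
    μ ≤ cubicForm mul c / 2 := by
  have hle := (inner_mul_self_eq_zero_and_le_of_forall_cubicForm_le hcomm hassoc hc hmax hcy).2
  rw [inner_mul_swap hcomm hassoc, hμ, inner_smul_right, real_inner_self_eq_norm_sq] at hle
  have : 0 < ‖y‖ ^ 2 := by positivity
  nlinarith

theorem exists_idempotent_forall_eigenvalue_le_half [FiniteDimensional ℝ V]
    (hcomm : ∀ x y, mul x y = mul y x) (hassoc : ∀ x y z, ⟪mul x y, z⟫ = ⟪x, mul y z⟫)
    (hmul : mul ≠ 0) :
    ∃ e : V, mul e e = e ∧ e ≠ 0 ∧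
      ∀ (t : ℝ) (y : V), y ≠ 0 → ⟪y, e⟫ = 0 → mul e y = t • y → t ≤ 1 / 2 := by
  obtain ⟨x₀, hx₀⟩ := exists_cubicForm_pos hcomm hassoc hmul
  have : Nontrivial V := ⟨x₀, 0, by rintro rfl; simp [cubicForm] at hx₀⟩
  obtain ⟨c, hc, hmax⟩ := exists_forall_cubicForm_le (mul := mul)
  set lam := cubicForm mul c
  have hlam : 0 < lam := pos_of_mul_pos_left (hx₀.trans_le (hmax x₀)) (by positivity)
  have hcc : mul c c = lam • c := mul_self_eq_smul_of_forall_cubicForm_le hcomm hassoc hc hmax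
  refine ⟨lam⁻¹ • c, ?_, ?_, fun t y hy hye hey ↦ ?_⟩
  · simp only [map_smul, LinearMap.smul_apply, hcc, smul_smul]
    congr 1
    field_simp
  · exact smul_ne_zero (inv_ne_zero hlam.ne') (by rintro rfl; simp at hc)
  · have hcy : ⟪c, y⟫ = 0 := by
      rw [inner_smul_right, real_inner_comm] at hye
      exact (mul_eq_zero.mp hye).resolve_left (inv_ne_zero hlam.ne')
    have hμ : mul c y = (lam * t) • y := by
      rw [map_smul, LinearMap.smul_apply, inv_smul_eq_iff₀ hlam.ne'] at hey
      rw [hey, smul_smul]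
    have := le_half_of_mul_eq_smul_of_forall_cubicForm_le hcomm hassoc hc hmax hy hcy hμ
    nlinarith

end CubicForm

/-- a finite-dimensional commutative real algebra with positive definite
associative symmetric bilinear form and nonzero multiplication contains a nonzero
idempotent `c` such that every eigenvalue of `L_c` on `c⊥` is at most `1/2`. -/
theorem stmt_19 {V : Type*} [AddCommGroup V] [Module ℝ V] [FiniteDimensional ℝ V]
    (mul : V →ₗ[ℝ] V →ₗ[ℝ] V) (hcomm : ∀ x y, mul x y = mul y x)
    (B : V →ₗ[ℝ] V →ₗ[ℝ] ℝ) (hsymm : ∀ x y, B x y = B y x)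
    (hassoc : ∀ x y z, B (mul x y) z = B x (mul y z))
    (hpos : ∀ x, x ≠ 0 → 0 < B x x)
    (hmul : ¬ ∀ x y, mul x y = 0) :
    ∃ c : V, mul c c = c ∧ c ≠ 0 ∧
      ∀ (t : ℝ) (y : V), y ≠ 0 → B y c = 0 → mul c y = t • y → t ≤ 1 / 2 := by
  let core : InnerProductSpace.Core ℝ V :=
    { inner := fun x y ↦ B x y
      conj_inner_symm := fun x y ↦ hsymm y x
      re_inner_nonneg := fun x ↦ by
        rcases eq_or_ne x 0 with rfl | hx
        exacts [by simp, (hpos x hx).le]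
      definite := fun x hx ↦ by_contra fun h ↦ (hpos x h).ne' hx
      add_left := fun x y z ↦ by simp
      smul_left := fun x y r ↦ by simp }
  let _ : NormedAddCommGroup V := core.toNormedAddCommGroup
  let _ : InnerProductSpace ℝ V := .ofCore core.toCore
  exact exists_idempotent_forall_eigenvalue_le_half hcomm hassoc
    fun h ↦ hmul fun x y ↦ by simp [h]
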